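/- For every t ∈ ℝ, the function M_t is entire, i.e., complex differentiable at every point of ℂ. -/

import Mathlib

open MeasureTheory

/-- `G x = Σ_{m=1}^∞ (2π²m⁴ e^{9x} − 3πm² e^{5x}) e^{−πm² e^{4x}}`. -/
noncomputable def G (x : ℝ) : ℝ :=
  ∑' m : ℕ, (2 * Real.pi ^ 2 * ((m : ℝ) + 1) ^ 4 * Real.exp (9 * x)
      - 3 * Real.pi * ((m : ℝ) + 1) ^ 2 * Real.exp (5 * x))
    * Real.exp (-(Real.pi * ((m : ℝ) + 1) ^ 2 * Real.exp (4 * x)))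

/-- `M t τ = ∫₀^∞ e^{−t x²} G x cosh (τ x) dx`. -/
noncomputable def M (t : ℝ) (τ : ℂ) : ℂ :=
  ∫ x in Set.Ioi (0 : ℝ),
    ((Real.exp (-(t * x ^ 2)) * G x : ℝ) : ℂ) * Complex.cosh (τ * (x : ℂ))

/-- `Ξ t λ = ∫₀^∞ e^{−t x²} G x cos (λ x) dx`. -/
noncomputable def Xi (t : ℝ) (l : ℂ) : ℂ :=
  ∫ x in Set.Ioi (0 : ℝ),
    ((Real.exp (-(t * x ^ 2)) * G x : ℝ) : ℂ) * Complex.cos (l * (x : ℂ))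

/-- `α t γ = (1/(2γ)!) ∫₀^∞ e^{−t x²} G x x^{2γ} dx`. -/
noncomputable def α (t : ℝ) (γ : ℕ) : ℝ :=
  (1 / (Nat.factorial (2 * γ) : ℝ)) *
    ∫ x in Set.Ioi (0 : ℝ), Real.exp (-(t * x ^ 2)) * G x * x ^ (2 * γ)

/-!
For `x ≥ 0` the series defining `G` is dominated by its first term, `|G x| ≤ C e^{9x - π e^{4x}}`.
This double-exponential decay beats every `e^{a x² + b x}`, so `e^{-t x²} G x` has finite
exponential moments of all orders on `(0, ∞)`. As `‖cosh (τ x)‖` and `‖x sinh (τ x)‖` grow at most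
like `e^{(‖τ‖ + 1) |x|}`, differentiation under the integral sign applies at every `τ`.
-/

open Filter Real Set Asymptotics

lemma Complex.norm_cosh_le_exp_norm (z : ℂ) : ‖cosh z‖ ≤ Real.exp ‖z‖ := by
  have h : 2 * ‖cosh z‖ = ‖exp z + exp (-z)‖ := by rw [← two_cosh, norm_mul, Complex.norm_two]
  have h₁ := norm_exp_le_exp_norm z
  have h₂ := norm_exp_le_exp_norm (-z)
  rw [norm_neg] at h₂
  linarith [norm_add_le (exp z) (exp (-z))]

lemma Complex.norm_sinh_le_exp_norm (z : ℂ) : ‖sinh z‖ ≤ Real.exp ‖z‖ := by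
  have h : 2 * ‖sinh z‖ = ‖exp z - exp (-z)‖ := by rw [← two_sinh, norm_mul, Complex.norm_two]
  have h₁ := norm_exp_le_exp_norm z
  have h₂ := norm_exp_le_exp_norm (-z)
  rw [norm_neg] at h₂
  linarith [norm_sub_le (exp z) (exp (-z))]

lemma norm_mul_ofReal_le {τ : ℂ} {R : ℝ} (hτ : ‖τ‖ ≤ R) (x : ℝ) : ‖τ * x‖ ≤ R * |x| := by
  rw [norm_mul, Complex.norm_real, norm_eq_abs]
  exact mul_le_mul_of_nonneg_right hτ (abs_nonneg x)

theorem differentiable_integral_mul_cosh {μ : Measure ℝ} {f : ℝ → ℂ}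
    (hf : AEStronglyMeasurable f μ)
    (hexp : ∀ R : ℝ, Integrable (fun x => ‖f x‖ * exp (R * |x|)) μ) :
    Differentiable ℂ fun τ : ℂ => ∫ x, f x * Complex.cosh (τ * x) ∂μ := by
  intro τ₀
  have hcont : ∀ τ : ℂ, Continuous fun x : ℝ => τ * (x : ℂ) := fun τ => by fun_prop
  have hF_int : Integrable (fun x => f x * Complex.cosh (τ₀ * x)) μ := by
    refine (hexp ‖τ₀‖).mono' (hf.mul (Complex.continuous_cosh.comp (hcont τ₀)).aestronglyMeasurable)
      (Eventually.of_forall fun x => ?_)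
    rw [norm_mul]
    gcongr
    exact (Complex.norm_cosh_le_exp_norm _).trans (exp_le_exp.2 (norm_mul_ofReal_le le_rfl x))
  have h_bound : ∀ᵐ x ∂μ, ∀ τ ∈ Metric.ball τ₀ 1,
      ‖f x * (Complex.sinh (τ * x) * x)‖ ≤ ‖f x‖ * exp ((‖τ₀‖ + 2) * |x|) := by
    refine Eventually.of_forall fun x τ hτ => ?_
    have hτR : ‖τ‖ ≤ ‖τ₀‖ + 1 := by
      have := norm_le_norm_add_norm_sub' τ τ₀
      rw [Metric.mem_ball, dist_eq_norm] at hτ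
      linarith
    rw [norm_mul, norm_mul, Complex.norm_real, norm_eq_abs]
    gcongr
    calc ‖Complex.sinh (τ * x)‖ * |x| ≤ exp ((‖τ₀‖ + 1) * |x|) * exp |x| := by
          gcongr
          · exact (Complex.norm_sinh_le_exp_norm _).trans (exp_le_exp.2 (norm_mul_ofReal_le hτR x))
          · linarith [add_one_le_exp |x|]
      _ = exp ((‖τ₀‖ + 2) * |x|) := by rw [← exp_add]; ring_nf
  have h_diff : ∀ᵐ x ∂μ, ∀ τ ∈ Metric.ball τ₀ 1, HasDerivAt (fun τ => f x * Complex.cosh (τ * x))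
      (f x * (Complex.sinh (τ * x) * x)) τ :=
    Eventually.of_forall fun x τ _ =>
      (((Complex.hasDerivAt_cosh _).comp τ (hasDerivAt_mul_const (x : ℂ))).const_mul (f x))
  exact (hasDerivAt_integral_of_dominated_loc_of_deriv_le (Metric.ball_mem_nhds τ₀ one_pos)
    (Eventually.of_forall fun τ =>
      hf.mul (Complex.continuous_cosh.comp (hcont τ)).aestronglyMeasurable) hF_int
    (hf.mul ((Complex.continuous_sinh.comp (hcont τ₀)).mul
      Complex.continuous_ofReal).aestronglyMeasurable)
    h_bound (hexp _) h_diff).2.differentiableAt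

lemma summable_pow_mul_exp_neg_mul_sq (k : ℕ) {c : ℝ} (hc : 0 < c) :
    Summable fun n : ℕ => ((n : ℝ) + 1) ^ k * exp (-(c * ((n : ℝ) + 1) ^ 2)) := by
  have h := (summable_nat_add_iff 1).2 (summable_pow_mul_exp_neg_nat_mul k hc)
  push_cast at h
  refine h.of_nonneg_of_le (fun n => by positivity) fun n => ?_
  have hn : (0 : ℝ) ≤ n := n.cast_nonneg
  gcongr
  nlinarith [mul_nonneg hc.le hn, mul_nonneg (mul_nonneg hc.le hn) hn]

noncomputable def Gterm (n : ℕ) (x : ℝ) : ℝ :=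
  (2 * π ^ 2 * ((n : ℝ) + 1) ^ 4 * exp (9 * x) - 3 * π * ((n : ℝ) + 1) ^ 2 * exp (5 * x))
    * exp (-(π * ((n : ℝ) + 1) ^ 2 * exp (4 * x)))

lemma G_eq_tsum_Gterm (x : ℝ) : G x = ∑' n, Gterm n x := rfl

lemma abs_Gterm_le (n : ℕ) (x : ℝ) :
    |Gterm n x| ≤ (2 * π ^ 2 * exp (9 * x) + 3 * π * exp (5 * x))
      * (((n : ℝ) + 1) ^ 4 * exp (-(π * exp (4 * x) * ((n : ℝ) + 1) ^ 2))) := by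
  have hN : ((n : ℝ) + 1) ^ 2 ≤ ((n : ℝ) + 1) ^ 4 :=
    pow_le_pow_right₀ (by linarith [(n.cast_nonneg : (0 : ℝ) ≤ n)]) (by norm_num)
  rw [Gterm, abs_mul, abs_exp, mul_right_comm π]
  calc |2 * π ^ 2 * ((n : ℝ) + 1) ^ 4 * exp (9 * x) - 3 * π * ((n : ℝ) + 1) ^ 2 * exp (5 * x)|
        * exp (-(π * exp (4 * x) * ((n : ℝ) + 1) ^ 2))
      ≤ (2 * π ^ 2 * ((n : ℝ) + 1) ^ 4 * exp (9 * x) + 3 * π * ((n : ℝ) + 1) ^ 4 * exp (5 * x))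
        * exp (-(π * exp (4 * x) * ((n : ℝ) + 1) ^ 2)) := by
        gcongr
        refine (abs_sub _ _).trans ?_
        rw [abs_of_nonneg (by positivity), abs_of_nonneg (by positivity)]
        gcongr
    _ = _ := by ring

lemma summable_Gterm (x : ℝ) : Summable fun n => Gterm n x :=
  .of_norm_bounded ((summable_pow_mul_exp_neg_mul_sq 4 (by positivity)).mul_left _)
    fun n => abs_Gterm_le n x

lemma measurable_G : Measurable G :=
  measurable_of_tendsto_metrizable
    (fun N => Finset.measurable_sum _ fun n _ =>
      (by unfold Gterm; fun_prop : Continuous (Gterm n)).measurable)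
    (tendsto_pi_nhds.2 fun x => (summable_Gterm x).hasSum.tendsto_sum_nat)

/-- For `x ≥ 0`, `e^{4x} ≥ 1` gives `π e^{4x} m² ≥ π e^{4x} + π (m² - 1)`, so every term is
bounded by `e^{9x - π e^{4x}}` times a summable sequence. -/
lemma exists_abs_G_le : ∃ C, ∀ x, 0 ≤ x → |G x| ≤ C * exp (9 * x - π * exp (4 * x)) := by
  have hS := summable_pow_mul_exp_neg_mul_sq 4 pi_pos
  refine ⟨(2 * π ^ 2 + 3 * π) * exp π
    * ∑' n : ℕ, ((n : ℝ) + 1) ^ 4 * exp (-(π * ((n : ℝ) + 1) ^ 2)), fun x hx => ?_⟩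
  have hterm : ∀ n : ℕ, |Gterm n x| ≤ (2 * π ^ 2 + 3 * π) * exp π * exp (9 * x - π * exp (4 * x))
      * (((n : ℝ) + 1) ^ 4 * exp (-(π * ((n : ℝ) + 1) ^ 2))) := by
    intro n
    have he : 1 ≤ exp (4 * x) := one_le_exp (by linarith)
    have hN : 1 ≤ ((n : ℝ) + 1) ^ 2 := one_le_pow₀ (by linarith [(n.cast_nonneg : (0 : ℝ) ≤ n)])
    have hcoef : 2 * π ^ 2 * exp (9 * x) + 3 * π * exp (5 * x)
        ≤ (2 * π ^ 2 + 3 * π) * exp (9 * x) := by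
      have := exp_le_exp.2 (by linarith : 5 * x ≤ 9 * x)
      nlinarith [pi_pos]
    have hdecay : exp (-(π * exp (4 * x) * ((n : ℝ) + 1) ^ 2))
        ≤ exp π * exp (-(π * exp (4 * x))) * exp (-(π * ((n : ℝ) + 1) ^ 2)) := by
      rw [← exp_add, ← exp_add, exp_le_exp]
      nlinarith [mul_nonneg (mul_nonneg pi_pos.le (sub_nonneg.2 he)) (sub_nonneg.2 hN)]
    refine (abs_Gterm_le n x).trans ?_
    calc _ ≤ ((2 * π ^ 2 + 3 * π) * exp (9 * x)) * (((n : ℝ) + 1) ^ 4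
          * (exp π * exp (-(π * exp (4 * x))) * exp (-(π * ((n : ℝ) + 1) ^ 2)))) := by
          gcongr
      _ = _ := by rw [sub_eq_add_neg, exp_add]; ring
  rw [G_eq_tsum_Gterm, mul_assoc _ (tsum _), mul_comm (tsum _), ← mul_assoc, ← tsum_mul_left]
  exact (norm_tsum_le_tsum_norm ((summable_Gterm x).norm)).trans
    ((summable_Gterm x).norm.tsum_le_tsum hterm (hS.mul_left _))

lemma integrableOn_exp_quadratic_sub_exp (a b : ℝ) {c d : ℝ} (hc : 0 < c) (hd : 0 < d) :
    IntegrableOn (fun x => exp (a * x ^ 2 + b * x - c * exp (d * x))) (Ioi 0) := by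
  have hpoly : (fun x : ℝ => a * x ^ 2 + (b + 1) * x) =o[atTop] fun x => exp (d * x) :=
    ((isLittleO_pow_exp_pos_mul_atTop 2 hd).const_mul_left a).add
      (by simpa using (isLittleO_pow_exp_pos_mul_atTop 1 hd).const_mul_left (b + 1))
  refine integrable_of_isBigO_exp_neg one_pos (by fun_prop) (IsBigO.of_bound 1 ?_)
  filter_upwards [hpoly.bound hc] with x hx
  rw [norm_of_nonneg (exp_pos _).le] at hx
  rw [norm_of_nonneg (exp_pos _).le, norm_of_nonneg (exp_pos _).le, one_mul, exp_le_exp]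
  linarith [le_norm_self (a * x ^ 2 + (b + 1) * x)]

lemma integrableOn_exp_mul_abs_G (a b : ℝ) :
    IntegrableOn (fun x => exp (a * x ^ 2 + b * x) * |G x|) (Ioi 0) := by
  obtain ⟨C, hC⟩ := exists_abs_G_le
  refine ((integrableOn_exp_quadratic_sub_exp a (b + 9) pi_pos four_pos).const_mul C).mono'
    (by have := measurable_G; fun_prop : Measurable _).aestronglyMeasurable ?_
  filter_upwards [ae_restrict_mem measurableSet_Ioi] with x (hx : 0 < x)
  rw [norm_mul, norm_of_nonneg (exp_pos _).le, norm_eq_abs, abs_abs]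
  calc exp (a * x ^ 2 + b * x) * |G x|
      ≤ exp (a * x ^ 2 + b * x) * (C * exp (9 * x - π * exp (4 * x))) := by
        gcongr; exact hC x hx.le
    _ = C * exp (a * x ^ 2 + (b + 9) * x - π * exp (4 * x)) := by
        rw [mul_left_comm, ← exp_add]; ring_nf

/-- `M t` is entire. -/
theorem M_entire (t : ℝ) : Differentiable ℂ (M t) := by
  have hf : Measurable fun x : ℝ => ((exp (-(t * x ^ 2)) * G x : ℝ) : ℂ) := by
    have := measurable_G; fun_prop
  refine differentiable_integral_mul_cosh hf.aestronglyMeasurable fun R => ?_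
  refine (integrableOn_exp_mul_abs_G (-t) R).congr_fun (fun x (hx : 0 < x) => ?_) measurableSet_Ioi
  rw [Complex.norm_real, norm_mul, norm_of_nonneg (exp_pos _).le, norm_eq_abs, abs_of_pos hx,
    mul_right_comm, ← exp_add]
  ring_nf
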